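/- Let Θ' : F_n → M_n be any truncated Magnus expansion and let φ ∈ Aut(F_n) satisfy |φ| = id_H. Then for all γ ∈ F_n: θ'₂(γ) − θ'₂(φ⁻¹(γ)) = θ₂(γ) − θ₂(φ⁻¹(γ)). (The twisted 1-cocycle τ₁ restricted to automorphisms acting trivially on H — in particular to the image of the pure braid group — is independent of the choice of Magnus expansion.) -/

import Mathlib

noncomputable section
open scoped TensorProduct


/-- `H = Fin n →₀ ℤ`, the first integral homology of the free group. -/
abbrev Hz (n : ℕ) : Type := Fin n →₀ ℤ

/-- The standard basis vector `X i`. -/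
def Xz (n : ℕ) (i : Fin n) : Hz n := Finsupp.single i 1

/-- `H ⊗ℤ H`. -/
abbrev HHz (n : ℕ) : Type := Hz n ⊗[ℤ] Hz n

/-- The degree ≤ 2 truncation of the Magnus algebra: underlying set `H × (H ⊗ H)`,
with multiplication `(u,s)·(u',s') = (u+u', s+s'+u⊗u')`. -/
def Mn (n : ℕ) : Type := Hz n × HHz n

namespace Mn

variable {n : ℕ}

instance : Group (Mn n) where
  mul a b := (a.1 + b.1, a.2 + b.2 + a.1 ⊗ₜ[ℤ] b.1)
  one := ((0 : Hz n), (0 : HHz n))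
  inv a := (-a.1, -a.2 + a.1 ⊗ₜ[ℤ] a.1)
  mul_assoc a b c := by
    show (_, _) = (_, _)
    refine Prod.ext (add_assoc _ _ _) ?_
    show a.2 + b.2 + a.1 ⊗ₜ[ℤ] b.1 + c.2 + (a.1 + b.1) ⊗ₜ[ℤ] c.1
        = a.2 + (b.2 + c.2 + b.1 ⊗ₜ[ℤ] c.1) + a.1 ⊗ₜ[ℤ] (b.1 + c.1)
    rw [TensorProduct.add_tmul, TensorProduct.tmul_add]
    abel
  one_mul a := by
    show ((0 : Hz n) + a.1, (0 : HHz n) + a.2 + (0 : Hz n) ⊗ₜ[ℤ] a.1) = a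
    rw [TensorProduct.zero_tmul]
    simp
    rfl
  mul_one a := by
    show (a.1 + 0, a.2 + (0:HHz n) + a.1 ⊗ₜ[ℤ] (0 : Hz n)) = a
    rw [TensorProduct.tmul_zero]
    simp
    rfl
  inv_mul_cancel a := by
    show (-a.1 + a.1, (-a.2 + a.1 ⊗ₜ[ℤ] a.1) + a.2 + (-a.1) ⊗ₜ[ℤ] a.1) = ((0:Hz n), (0:HHz n))
    rw [TensorProduct.neg_tmul]
    refine Prod.ext (by simp) ?_
    show _ = (0 : HHz n)
    abel

end Mn

/-- The truncated standard Magnus expansion `Θ : F_n →* M_n`, `x_i ↦ (X_i, 0)`. -/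
def Theta (n : ℕ) : FreeGroup (Fin n) →* Mn n :=
  FreeGroup.lift fun i => ((Xz n i, 0) : Mn n)

/-- The abelianization map `a : F_n → H`, the first component of `Θ`. -/
def aMap (n : ℕ) (γ : FreeGroup (Fin n)) : Hz n := (Theta n γ).1

/-- `θ₂`, the second component of the truncated Magnus expansion. -/
def theta2 (n : ℕ) (γ : FreeGroup (Fin n)) : HHz n := (Theta n γ).2

/-!
The second components of two truncated Magnus expansions differ by a homomorphism from `F_n`
into the abelian group `H ⊗ H`. Such a homomorphism is determined by its values on the
generators, hence factors through the abelianization `a : F_n → H`. Since `a ∘ φ⁻¹ = a`, the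
difference takes the same value at `γ` and at `φ⁻¹ γ`, which is the claim after rearranging.
-/

namespace Mn

variable {n : ℕ}

@[simp]
lemma snd_mul (u v : Mn n) : (u * v).2 = u.2 + v.2 + u.1 ⊗ₜ[ℤ] v.1 := rfl

@[simp]
lemma snd_one : (1 : Mn n).2 = 0 := rfl

def fstHom : Mn n →* Multiplicative (Hz n) where
  toFun u := Multiplicative.ofAdd u.1
  map_one' := rfl
  map_mul' _ _ := rfl

/-- The correction term `u ⊗ v` in `snd_mul` cancels once the first components agree. -/
def sndSubHom {G : Type*} [Group G] (Θ₁ Θ₂ : G →* Mn n) (h : ∀ g, (Θ₁ g).1 = (Θ₂ g).1) :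
    G →* Multiplicative (HHz n) where
  toFun g := Multiplicative.ofAdd ((Θ₁ g).2 - (Θ₂ g).2)
  map_one' := by simp
  map_mul' g g' := by
    simp only [map_mul, snd_mul, h, ← ofAdd_add]
    congr 1
    abel

end Mn

def aMapHom (n : ℕ) : FreeGroup (Fin n) →* Multiplicative (Hz n) :=
  Mn.fstHom.comp (Theta n)

lemma Theta_of (n : ℕ) (i : Fin n) : Theta n (FreeGroup.of i) = ((Xz n i, 0) : Mn n) :=
  FreeGroup.lift_apply_of (β := Mn n)

lemma aMap_of (n : ℕ) (i : Fin n) : aMap n (FreeGroup.of i) = Finsupp.single i 1 :=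
  congrArg Prod.fst (Theta_of n i)

lemma MonoidHom.eq_of_aMap_eq {n : ℕ} {A : Type*} [AddCommGroup A]
    (f : FreeGroup (Fin n) →* Multiplicative A) {γ δ : FreeGroup (Fin n)}
    (h : aMap n γ = aMap n δ) : f γ = f δ := by
  let g : Hz n →+ A :=
    (Finsupp.linearCombination ℤ fun i => (f (FreeGroup.of i)).toAdd).toAddMonoidHom
  have hf : f = g.toMultiplicative.comp (aMapHom n) :=
    FreeGroup.ext_hom _ _ fun i => by
      change f (FreeGroup.of i) = Multiplicative.ofAdd (g (aMap n (FreeGroup.of i)))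
      simp [g, aMap_of]
  have hfa : ∀ ε, f ε = Multiplicative.ofAdd (g (aMap n ε)) :=
    fun ε => DFunLike.congr_fun hf ε
  rw [hfa, hfa, h]

theorem stmt14_general (n : ℕ)
    (Θ' : FreeGroup (Fin n) →* Mn n)
    (hΘ' : ∀ γ : FreeGroup (Fin n), (Θ' γ).1 = aMap n γ)
    (φ : MulAut (FreeGroup (Fin n)))
    (hφ : ∀ γ : FreeGroup (Fin n), aMap n (φ γ) = aMap n γ) :
    ∀ γ : FreeGroup (Fin n),
      (Θ' γ).2 - (Θ' (φ⁻¹ γ)).2 = theta2 n γ - theta2 n (φ⁻¹ γ) := by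
  intro γ
  have ha : aMap n γ = aMap n (φ⁻¹ γ) := by simpa using hφ (φ⁻¹ γ)
  have hdiff := congrArg Multiplicative.toAdd
    ((Mn.sndSubHom Θ' (Theta n) hΘ').eq_of_aMap_eq ha)
  rw [sub_eq_sub_iff_sub_eq_sub]
  exact hdiff

theorem stmt14 (n : ℕ) (hn : 2 ≤ n)
    (Θ' : FreeGroup (Fin n) →* Mn n)
    (hΘ' : ∀ γ : FreeGroup (Fin n), (Θ' γ).1 = aMap n γ)
    (φ : MulAut (FreeGroup (Fin n)))
    (hφ : ∀ γ : FreeGroup (Fin n), aMap n (φ γ) = aMap n γ) :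
    ∀ γ : FreeGroup (Fin n),
      (Θ' γ).2 - (Θ' (φ⁻¹ γ)).2 = theta2 n γ - theta2 n (φ⁻¹ γ) :=
  stmt14_general n Θ' hΘ' φ hφ
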